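/- Let F be a field of characteristic 3. For every permitted coloring of ∂Δ⁵, the alternating cocycle sum of the polynomial c(a,b,c,d,e) = e²+2d²+2bd+ad+c²+bc+2ac vanishes: Σ_{i=1}^{6} (−1)^{i−1} c[u_i] = 0 in F, where u_i = {1,…,6}∖{i}. -/

import Mathlib

/-!
Every tetrahedron `{a, b}ᶜ` of ∂Δ⁵ is a common face of the pentachora `u_a` and `u_b`, and a
permitted coloring computes its y-value from the x-values of either one; equating the two gives a
linear relation between x-values. The five relations along the faces of `u_0` (the pentachoron
omitting the first vertex) already suffice: in characteristic 3 the alternating cocycle sum is a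
combination of them with linear coefficients.
-/

open Finset

/-- The 5×5 integer matrix 𝓡. -/
def Rmat : Matrix (Fin 5) (Fin 5) ℤ :=
  !![0, -2, 1, 1, -2;
     0, -1, 0, 1, -1;
     -1, 2, -2, 0, 1;
     -1, 3, -2, -1, 2;
     0, 1, -1, 0, 0]

/-- The table of 2-columns ψ for a tetrahedron with (sorted) vertices indexed by `Fin 4`:
for indices a < c, the value of ψ on the edge joining the a-th and the c-th vertex. -/
def psiPair (F : Type*) [Field F] (a c : Fin 4) : F × F :=
  if a = 0 ∧ c = 1 then (-1, 1)
  else if a = 0 ∧ c = 2 then (2, -1)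
  else if a = 0 ∧ c = 3 then (-1, 0)
  else if a = 1 ∧ c = 2 then (-1, 0)
  else if a = 1 ∧ c = 3 then (0, 1)
  else if a = 2 ∧ c = 3 then (1, -1)
  else (0, 0)

/-- ψ_{t,b} for a tetrahedron `t` (a 4-element subset of the vertex set) and an edge `b`:
zero when `b ⊄ t`, and the corresponding table value otherwise. -/
def psi (F : Type*) [Field F] {V : Type*} [LinearOrder V]
    (t : Finset V) (ht : t.card = 4) (b : Finset V) : F × F :=
  ∑ a : Fin 4, ∑ c : Fin 4,
    if a < c ∧ b = {t.orderEmbOfFin ht a, t.orderEmbOfFin ht c} then psiPair F a c else 0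

/-- The i-th vertex (in increasing order) of a pentachoron `u`. -/
def pentVert {V : Type*} [LinearOrder V] (u : Finset V) (hu : u.card = 5) (i : Fin 5) : V :=
  u.orderEmbOfFin hu i

/-- The i-th tetrahedral 3-face of a pentachoron `u`: it omits the i-th vertex. -/
def pentFace {V : Type*} [LinearOrder V] (u : Finset V) (hu : u.card = 5) (i : Fin 5) :
    Finset V :=
  u.erase (pentVert u hu i)

/-- A coloring χ (assigning a pair (x_t, y_t) ∈ F × F to each tetrahedron) is permitted on a
pentachoron `u` if the column of y-values on its five 3-faces equals 𝓡 applied to the column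
of x-values. -/
def PermittedOn {V : Type*} [LinearOrder V] {F : Type*} [Field F]
    (u : Finset V) (hu : u.card = 5) (χ : Finset V → F × F) : Prop :=
  ∀ i : Fin 5,
    (χ (pentFace u hu i)).2 = ∑ j : Fin 5, (Rmat i j : F) * (χ (pentFace u hu j)).1

/-- The coloring assigning ψ_{t,b} to every tetrahedron `t`. -/
def Xi (F : Type*) [Field F] {V : Type*} [LinearOrder V] (b : Finset V) :
    Finset V → F × F :=
  fun t => if ht : t.card = 4 then psi F t ht b else 0


/-- A coloring of ∂Δ⁵ (vertex set `Fin 6`) is permitted if it is permitted on each of the six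
pentachora, i.e., on every 5-element subset of the vertices. -/
def Permitted {F : Type*} [Field F] (χ : Finset (Fin 6) → F × F) : Prop :=
  ∀ (u : Finset (Fin 6)) (hu : u.card = 5), PermittedOn u hu χ

lemma card_erase6 (i : Fin 6) : ((univ : Finset (Fin 6)).erase i).card = 5 := by
  rw [Finset.card_erase_of_mem (mem_univ i)]
  simp

/-- `xv F χ i j` is the x-value of the coloring χ on the j-th 3-face (the one omitting the
j-th smallest vertex) of the pentachoron u_i = {1,…,6} ∖ {i} of ∂Δ⁵; for the pentachoron
u_i this gives the substitutions a = xv i 0, b = xv i 1, c = xv i 2, d = xv i 3,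
e = xv i 4. -/
def xv (F : Type*) [Field F] (χ : Finset (Fin 6) → F × F) (i : Fin 6) (j : Fin 5) : F :=
  (χ (pentFace ((univ : Finset (Fin 6)).erase i) (card_erase6 i) j)).1

theorem PermittedOn.sum_eq_of_pentFace_eq {V F : Type*} [LinearOrder V] [Field F]
    {χ : Finset V → F × F} {u v : Finset V} {hu : u.card = 5} {hv : v.card = 5}
    (hχu : PermittedOn u hu χ) (hχv : PermittedOn v hv χ) {j l : Fin 5}
    (h : pentFace u hu j = pentFace v hv l) :
    ∑ m, (Rmat j m : F) * (χ (pentFace u hu m)).1 =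
      ∑ m, (Rmat l m : F) * (χ (pentFace v hv m)).1 := by
  rw [← hχu j, ← hχv l, h]

theorem pentVert_erase_univ (i : Fin 6) (j : Fin 5) :
    pentVert (univ.erase i) (card_erase6 i) j = i.succAbove j := by
  simp only [pentVert, ← compl_singleton, orderEmbOfFin_compl_singleton_apply]
  rfl

theorem pentFace_erase_univ (i : Fin 6) (j : Fin 5) :
    pentFace (univ.erase i) (card_erase6 i) j = {i, i.succAbove j}ᶜ := by
  rw [pentFace, pentVert_erase_univ, compl_insert, compl_singleton, erase_right_comm]

def oppX {F : Type*} (χ : Finset (Fin 6) → F × F) (a b : Fin 6) : F := (χ {a, b}ᶜ).1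

section

variable {F : Type*} [Field F]

theorem xv_eq_oppX (χ : Finset (Fin 6) → F × F) (i : Fin 6) (j : Fin 5) :
    xv F χ i j = oppX χ (min i (i.succAbove j)) (max i (i.succAbove j)) := by
  rw [xv, pentFace_erase_univ, oppX]
  rcases le_total i (i.succAbove j) with h | h
  · rw [min_eq_left h, max_eq_right h]
  · rw [min_eq_right h, max_eq_left h, pair_comm]

theorem Permitted.sum_xv_eq_of_succAbove {χ : Finset (Fin 6) → F × F} (hχ : Permitted χ)
    {i k : Fin 6} {j l : Fin 5} (hk : i.succAbove j = k) (hi : k.succAbove l = i) :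
    ∑ m, (Rmat j m : F) * xv F χ i m = ∑ m, (Rmat l m : F) * xv F χ k m :=
  (hχ _ _).sum_eq_of_pentFace_eq (hχ _ _) <| by
    rw [pentFace_erase_univ, pentFace_erase_univ, hk, hi, pair_comm]

end

/-- char 3: the alternating cocycle sum of e²+2d²+2bd+ad+c²+bc+2ac over a permitted coloring of ∂Δ⁵ vanishes. -/
theorem statement15 (F : Type*) [Field F] [CharP F 3]
    (χ : Finset (Fin 6) → F × F) (hχ : Permitted χ) :
    ∑ i : Fin 6, (-1 : F) ^ (i : ℕ) *
      (let a := xv F χ i 0; let b := xv F χ i 1; let c := xv F χ i 2;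
       let d := xv F χ i 3; let e := xv F χ i 4;
       e^2 + 2*d^2 + 2*b*d + a*d + c^2 + b*c + 2*a*c) = 0 := by
  have glue (b : Fin 5) :=
    hχ.sum_xv_eq_of_succAbove (i := 0) (j := b) rfl (Fin.succ_succAbove_zero b)
  obtain ⟨g0, g1, g2, g3, g4⟩ : _ ∧ _ ∧ _ ∧ _ ∧ _ := ⟨glue 0, glue 1, glue 2, glue 3, glue 4⟩
  simp only [Fin.sum_univ_five, Rmat, Matrix.of_apply, Matrix.cons_val', Matrix.cons_val_zero,
    Matrix.cons_val_one, Matrix.cons_val] at g0 g1 g2 g3 g4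
  simp only [Fin.sum_univ_six, xv_eq_oppX, Fin.succAbove, Fin.reduceCastSucc, Fin.reduceSucc,
    Fin.reduceLT, Fin.reduceLE, min_def, max_def, Fin.coe_ofNat_eq_mod, Nat.reduceMod, ite_true,
    ite_false] at g0 g1 g2 g3 g4 ⊢
  -- the coefficients solve a linear system over 𝔽₃
  linear_combination (norm := skip)
    (oppX χ 0 5 + oppX χ 1 5 + oppX χ 2 5 - oppX χ 3 5) * g0
      + (oppX χ 0 4 - oppX χ 1 4 - oppX χ 0 3 + oppX χ 1 3) * (g0 + g1)
      + (oppX χ 0 2 - oppX χ 1 2 - oppX χ 0 4 + oppX χ 1 4) * g2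
      + (oppX χ 0 3 - oppX χ 1 3 - oppX χ 0 2 + oppX χ 1 2) * (g3 - g4)
  ring_nf
  reduce_mod_char!
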